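/- (Lemma 2 of the paper — online lower bound of n for integer-valued vector timestamps on the star graph.) Let n ≥ 2 and s ≤ n − 1. For P : ℕ and a permutation σ of Fin (n − 1), define the happened-before relation HB_{P,σ} on the type (Fin P ⊕ Fin (n − 1)) ⊕ Fin (n − 1) (first summand: the P initial computation events at the central process, in order; second summand: the send events, one at each of the n − 1 radial processes; third summand: the receive events at the central process, in the order they occur) by: HB (comp q) (comp q') iff q < q'; HB (comp q) (recv j) holds always; HB (send i) (recv j) iff σ i ≤ j; HB (recv j) (recv j') iff j < j'; and HB holds for no other pair (in particular each send event is unrelated to every computation event and to the other send events). Then there is NO pair of functions w : ℕ → (Fin s → ℕ) and t : Fin (n − 1) → (Fin s → ℕ) such that for every P : ℕ and every permutation σ of Fin (n − 1) there exists u : Fin (n − 1) → (Fin s → ℕ) with the combined labeling T (sending comp q ↦ w q, send i ↦ t i, recv j ↦ u j) satisfying: (a) T is injective, and (b) for all events x, y, HB_{P,σ} x y holds if and only if T x < T y, where < is the strict pointwise order on Fin s → ℕ. -/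
import Mathlib


/-- Happened-before relation for the star-graph execution of Lemma 2: the central
process performs `P` computation events (`Sum.inl (Sum.inl q)`) in order, each of
the `m` radial processes performs one send event (`Sum.inl (Sum.inr i)`), and the
central process then performs `m` receive events (`Sum.inr j`) in the order given by
the permutation `σ`.  Every computation event happens before every receive event;
the send event of radial process `i` happens before the `j`-th receive event iff
`σ i ≤ j`; no other pairs are related. -/
def starHBcomp {P m : ℕ} (σ : Equiv.Perm (Fin m)) :
    ((Fin P ⊕ Fin m) ⊕ Fin m) → ((Fin P ⊕ Fin m) ⊕ Fin m) → Prop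
  | Sum.inl (Sum.inl q), Sum.inl (Sum.inl q') => q < q'
  | Sum.inl (Sum.inl _), Sum.inr _ => True
  | Sum.inl (Sum.inr i), Sum.inr j => σ i ≤ j
  | Sum.inr j, Sum.inr j' => j < j'
  | _, _ => False

lemma not_lt_exists_coord {s : ℕ} {f g : Fin s → ℕ} (hne : f ≠ g) (hnlt : ¬ f < g) :
    ∃ c, g c < f c := by
  by_contra h
  push_neg at h
  exact hnlt (lt_of_le_of_ne (fun c => h c) hne)


/-- Lemma 2 of the paper: for the star graph with `n ≥ 2` processes, no online
algorithm can assign integer-valued vector timestamps of length `s ≤ n - 1`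
capturing happened-before exactly.  The computation-event timestamps `w` and the
send-event timestamps `t` must be fixed independently of the number `P` of
computation events and of the delivery order `σ`; the receive-event timestamps `u`
may depend on both. -/
theorem star_online_lower_bound_nat (n s : ℕ) (hn : 2 ≤ n) (hs : s ≤ n - 1) :
    ¬ ∃ (w : ℕ → (Fin s → ℕ)) (t : Fin (n - 1) → (Fin s → ℕ)),
        ∀ (P : ℕ) (σ : Equiv.Perm (Fin (n - 1))),
          ∃ u : Fin (n - 1) → (Fin s → ℕ),
            Function.Injective
              (Sum.elim (Sum.elim (fun q : Fin P => w q.val) t) u) ∧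
            ∀ x y : (Fin P ⊕ Fin (n - 1)) ⊕ Fin (n - 1),
              starHBcomp σ x y ↔
                Sum.elim (Sum.elim (fun q : Fin P => w q.val) t) u x <
                  Sum.elim (Sum.elim (fun q : Fin P => w q.val) t) u y := by
  rintro ⟨w, t, H⟩
  have hm : 1 ≤ n - 1 := by omega
  -- w is strictly increasing
  have hA : ∀ q q' : ℕ, q < q' → w q < w q' := by
    intro q q' hqq
    obtain ⟨u, hinj, hiff⟩ := H (q' + 1) 1
    have := (hiff (Sum.inl (Sum.inl ⟨q, by omega⟩)) (Sum.inl (Sum.inl ⟨q', by omega⟩))).mp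
    exact this (by simpa [starHBcomp, Fin.lt_def] using hqq)
  have hMono : ∀ q q' : ℕ, q ≤ q' → ∀ cx, w q cx ≤ w q' cx := by
    intro q q' h cx
    rcases eq_or_lt_of_le h with rfl | h
    · exact le_refl _
    · exact (hA q q' h).le cx
  -- send events are incomparable with computation events
  have hB1 : ∀ (q : ℕ) (i : Fin (n - 1)), ¬ t i < w q := by
    intro q i hlt
    obtain ⟨u, hinj, hiff⟩ := H (q + 1) 1
    exact (hiff (Sum.inl (Sum.inr i)) (Sum.inl (Sum.inl ⟨q, by omega⟩))).mpr hlt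
  have hB2 : ∀ (q : ℕ) (i : Fin (n - 1)), w q ≠ t i := by
    intro q i h
    obtain ⟨u, hinj, hiff⟩ := H (q + 1) 1
    have := hinj (a₁ := Sum.inl (Sum.inl ⟨q, by omega⟩)) (a₂ := Sum.inl (Sum.inr i)) h
    simp at this
  -- some coordinate of w is unbounded
  have hUnb : ∃ l : Fin s, ∀ B : ℕ, ∃ q, B < w q l := by
    by_contra h
    push_neg at h
    choose B hB using h
    have hS : StrictMono (fun q => ∑ l, w q l) := by
      intro q q' hqq
      have h1 := hA q q' hqq
      rw [Pi.lt_def] at h1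
      obtain ⟨hle, l0, hl0⟩ := h1
      exact Finset.sum_lt_sum (fun l _ => hle l) ⟨l0, Finset.mem_univ _, hl0⟩
    have hSle : ∀ q : ℕ, q ≤ ∑ l, w q l := by
      intro q
      induction q with
      | zero => exact Nat.zero_le _
      | succ k ih => have := hS (show k < k + 1 by omega); simp only at this; omega
    have h2 : ∀ q, (∑ l, w q l) ≤ ∑ l, B l :=
      fun q => Finset.sum_le_sum (fun l _ => hB l q)
    have h3 := hSle ((∑ l, B l) + 1)
    have h4 := h2 ((∑ l, B l) + 1)
    omega
  -- key step: for each i there is a coordinate where t i dominates everything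
  have hKey : ∀ (i : Fin (n - 1)) (P : ℕ), 1 ≤ P →
      ∃ c, (∀ q < P, w q c < t i c) ∧ ∀ i', i' ≠ i → t i' c < t i c := by
    intro i P hP
    by_cases hm2 : 2 ≤ n - 1
    · set jm1 : Fin (n - 1) := ⟨n - 1 - 1, by omega⟩ with hjm1
      set jm2 : Fin (n - 1) := ⟨n - 1 - 2, by omega⟩ with hjm2
      obtain ⟨u, hinj, hiff⟩ := H P (Equiv.swap i jm1)
      have hHB : ¬ starHBcomp (P := P) (Equiv.swap i jm1) (Sum.inl (Sum.inr i)) (Sum.inr jm2) := by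
        show ¬ (Equiv.swap i jm1 i ≤ jm2)
        rw [Equiv.swap_apply_left, Fin.le_def]
        simp only [hjm1, hjm2]
        omega
      have hti : ¬ t i < u jm2 := fun hlt => hHB ((hiff _ _).mpr hlt)
      have hne : t i ≠ u jm2 := by
        intro h
        have := hinj (a₁ := Sum.inl (Sum.inr i)) (a₂ := Sum.inr jm2) h
        simp at this
      obtain ⟨c, hc⟩ := not_lt_exists_coord hne hti
      refine ⟨c, ?_, ?_⟩
      · intro q hq
        have hlt : w q < u jm2 :=
          (hiff (Sum.inl (Sum.inl ⟨q, hq⟩)) (Sum.inr jm2)).mp trivial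
        exact lt_of_le_of_lt (hlt.le c) hc
      · intro i' hi'
        have h1 : Equiv.swap i jm1 i' ≠ jm1 := by
          intro h
          exact hi' ((Equiv.swap i jm1).injective
            (h.trans (Equiv.swap_apply_left i jm1).symm))
        have h2 : (Equiv.swap i jm1 i' : Fin (n - 1)).val ≠ n - 1 - 1 := by
          intro h; exact h1 (Fin.ext (by simpa [hjm1] using h))
        have hσ : Equiv.swap i jm1 i' ≤ jm2 := by
          rw [Fin.le_def]
          have := (Equiv.swap i jm1 i').isLt
          simp only [hjm2]
          omega
        have hlt : t i' < u jm2 := (hiff (Sum.inl (Sum.inr i')) (Sum.inr jm2)).mp hσ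
        exact lt_of_le_of_lt (hlt.le c) hc
    · -- n - 1 = 1 : only one radial process
      have hm1 : n - 1 = 1 := by omega
      obtain ⟨c, hc⟩ := not_lt_exists_coord (Ne.symm (hB2 (P - 1) i)) (hB1 (P - 1) i)
      refine ⟨c, fun q hq => lt_of_le_of_lt (hMono q (P - 1) (by omega) c) hc,
        fun i' hi' => absurd ?_ hi'⟩
      have : Subsingleton (Fin (n - 1)) := by rw [hm1]; infer_instance
      exact Subsingleton.elim i' i
  -- remove the dependence on P
  have hc : ∀ i : Fin (n - 1),
      ∃ c, (∀ q, w q c < t i c) ∧ ∀ i', i' ≠ i → t i' c < t i c := by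
    intro i
    by_contra hno
    push_neg at hno
    have key : ∀ c : Fin s, ∃ qc : ℕ,
        t i c ≤ w qc c ∨ ∃ i', i' ≠ i ∧ t i c ≤ t i' c := by
      intro c
      by_cases hcq : ∀ q, w q c < t i c
      · obtain ⟨i', hi', hle⟩ := hno c hcq
        exact ⟨0, Or.inr ⟨i', hi', hle⟩⟩
      · push_neg at hcq
        obtain ⟨q, hq⟩ := hcq
        exact ⟨q, Or.inl hq⟩
    choose g hg using key
    obtain ⟨c, hc1, hc2⟩ := hKey i (Finset.univ.sup g + 1) (by omega)
    rcases hg c with h | ⟨i', hi', hle⟩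
    · have hgc : g c ≤ Finset.univ.sup g := Finset.le_sup (Finset.mem_univ c)
      have := hc1 (g c) (by omega)
      omega
    · have := hc2 i' hi'
      omega
  choose cc hcc1 hcc2 using hc
  obtain ⟨l, hl⟩ := hUnb
  have hccinj : Function.Injective cc := by
    intro i i' h
    by_contra hne
    have h1 := hcc2 i i' (Ne.symm hne)
    have h2 := hcc2 i' i hne
    rw [h] at h1
    exact lt_asymm h1 h2
  have hbij : Function.Bijective cc := by
    refine (Fintype.bijective_iff_injective_and_card cc).mpr ⟨hccinj, ?_⟩
    have := Fintype.card_le_of_injective cc hccinj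
    simp only [Fintype.card_fin] at this ⊢
    omega
  obtain ⟨i, hi⟩ := hbij.2 l
  obtain ⟨q, hq⟩ := hl (t i l)
  have h5 := hcc1 i q
  rw [hi] at h5
  omega
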